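/- Let ω : 𝕋 × ℝ → ℝ be smooth with zero x-average and rapid decay, u = ∇⊥Δ⁻¹ω. Then the pointwise identity y(u·∇ω) = (∇⊥Δ⁻¹(yω))·∇ω + 2(∇⊥∂_yΔ⁻²ω)·∇ω + (Δ⁻¹ω)∂ₓω holds. -/

import Mathlib

open MeasureTheory Real

/-- Partial derivative in the first (x) variable. -/
noncomputable def pdx (f : ℝ → ℝ → ℝ) (x y : ℝ) : ℝ := deriv (fun x' => f x' y) x

/-- Partial derivative in the second (y) variable. -/
noncomputable def pdy (f : ℝ → ℝ → ℝ) (x y : ℝ) : ℝ := deriv (fun y' => f x y') y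

/-- Laplacian. -/
noncomputable def lap (f : ℝ → ℝ → ℝ) (x y : ℝ) : ℝ := pdx (pdx f) x y + pdy (pdy f) x y

/-- `f` and all its derivatives decay rapidly in `y`, uniformly in `x`. -/
def RapidDecay (f : ℝ → ℝ → ℝ) : Prop :=
  ∀ k n : ℕ, ∃ C : ℝ, ∀ x y : ℝ,
    |y| ^ n * ‖iteratedFDeriv ℝ k (Function.uncurry f) (x, y)‖ ≤ C

/-- `f` is `2π`-periodic in `x` (i.e. lives on `𝕋 × ℝ`). -/
def PerX (f : ℝ → ℝ → ℝ) : Prop := ∀ y : ℝ, Function.Periodic (fun x => f x y) (2 * π)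

/-- `f` has zero `x`-average. -/
def ZeroAvgX (f : ℝ → ℝ → ℝ) : Prop := ∀ y : ℝ, ∫ x in (0:ℝ)..(2 * π), f x y = 0

open Function

section basic
variable {f : ℝ → ℝ → ℝ}

lemma hasDerivAt_slice_x (hf : Differentiable ℝ (uncurry f)) (x y : ℝ) :
    HasDerivAt (fun x' => f x' y) (fderiv ℝ (uncurry f) (x, y) (1, 0)) x := by
  have h1 : HasDerivAt (fun x' : ℝ => (x', y)) ((1:ℝ), (0:ℝ)) x :=
    (hasDerivAt_id x).prodMk (hasDerivAt_const x y)
  have := (hf (x, y)).hasFDerivAt.comp_hasDerivAt x h1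
  exact this

lemma hasDerivAt_slice_y (hf : Differentiable ℝ (uncurry f)) (x y : ℝ) :
    HasDerivAt (fun y' => f x y') (fderiv ℝ (uncurry f) (x, y) (0, 1)) y := by
  have h1 : HasDerivAt (fun y' : ℝ => (x, y')) ((0:ℝ), (1:ℝ)) y :=
    (hasDerivAt_const y x).prodMk (hasDerivAt_id y)
  have := (hf (x, y)).hasFDerivAt.comp_hasDerivAt y h1
  exact this

lemma pdx_eq (hf : Differentiable ℝ (uncurry f)) (x y : ℝ) :
    pdx f x y = fderiv ℝ (uncurry f) (x, y) (1, 0) :=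
  (hasDerivAt_slice_x hf x y).deriv

lemma pdy_eq (hf : Differentiable ℝ (uncurry f)) (x y : ℝ) :
    pdy f x y = fderiv ℝ (uncurry f) (x, y) (0, 1) :=
  (hasDerivAt_slice_y hf x y).deriv

lemma hasDerivAt_pdx (hf : Differentiable ℝ (uncurry f)) (x y : ℝ) :
    HasDerivAt (fun x' => f x' y) (pdx f x y) x := by
  rw [pdx_eq hf]; exact hasDerivAt_slice_x hf x y

lemma hasDerivAt_pdy (hf : Differentiable ℝ (uncurry f)) (x y : ℝ) :
    HasDerivAt (fun y' => f x y') (pdy f x y) y := by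
  rw [pdy_eq hf]; exact hasDerivAt_slice_y hf x y

lemma contDiff_pdx (hf : ContDiff ℝ (⊤ : ℕ∞) (uncurry f)) : ContDiff ℝ (⊤ : ℕ∞) (uncurry (pdx f)) := by
  have h : uncurry (pdx f) = fun p : ℝ × ℝ => fderiv ℝ (uncurry f) p (1, 0) := by
    funext p
    exact pdx_eq (hf.differentiable (by simp)) p.1 p.2
  rw [h]
  exact (hf.fderiv_right (by simp)).clm_apply contDiff_const

lemma contDiff_pdy (hf : ContDiff ℝ (⊤ : ℕ∞) (uncurry f)) : ContDiff ℝ (⊤ : ℕ∞) (uncurry (pdy f)) := by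
  have h : uncurry (pdy f) = fun p : ℝ × ℝ => fderiv ℝ (uncurry f) p (0, 1) := by
    funext p
    exact pdy_eq (hf.differentiable (by simp)) p.1 p.2
  rw [h]
  exact (hf.fderiv_right (by simp)).clm_apply contDiff_const

end basic

section second
variable {f : ℝ → ℝ → ℝ}

/-- generic: pd in direction v of (pd in direction w) in terms of second fderiv -/
lemma pd_comp_aux (hf : ContDiff ℝ (⊤ : ℕ∞) (uncurry f)) (p : ℝ × ℝ) (v : ℝ × ℝ) :
    fderiv ℝ (fun q : ℝ × ℝ => fderiv ℝ (uncurry f) q v) p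
      = (ContinuousLinearMap.apply ℝ ℝ v).comp (fderiv ℝ (fderiv ℝ (uncurry f)) p) := by
  have hd : HasFDerivAt (fderiv ℝ (uncurry f)) (fderiv ℝ (fderiv ℝ (uncurry f)) p) p :=
    (((hf.fderiv_right (m := (⊤ : ℕ∞)) (by simp)).differentiable (by simp)) p).hasFDerivAt
  exact ((ContinuousLinearMap.apply ℝ ℝ v).hasFDerivAt.comp p hd).fderiv

lemma uncurry_pdx (hf : ContDiff ℝ (⊤ : ℕ∞) (uncurry f)) :
    uncurry (pdx f) = fun p : ℝ × ℝ => fderiv ℝ (uncurry f) p (1, 0) := by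
  funext p; exact pdx_eq (hf.differentiable (by simp)) p.1 p.2

lemma uncurry_pdy (hf : ContDiff ℝ (⊤ : ℕ∞) (uncurry f)) :
    uncurry (pdy f) = fun p : ℝ × ℝ => fderiv ℝ (uncurry f) p (0, 1) := by
  funext p; exact pdy_eq (hf.differentiable (by simp)) p.1 p.2

lemma pdx_pdx_eq (hf : ContDiff ℝ (⊤ : ℕ∞) (uncurry f)) (x y : ℝ) :
    pdx (pdx f) x y = fderiv ℝ (fderiv ℝ (uncurry f)) (x, y) (1, 0) (1, 0) := by
  rw [pdx_eq ((contDiff_pdx hf).differentiable (by simp)), uncurry_pdx hf,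
    pd_comp_aux hf (x, y) (1, 0)]
  rfl

lemma pdy_pdx_eq (hf : ContDiff ℝ (⊤ : ℕ∞) (uncurry f)) (x y : ℝ) :
    pdy (pdx f) x y = fderiv ℝ (fderiv ℝ (uncurry f)) (x, y) (0, 1) (1, 0) := by
  rw [pdy_eq ((contDiff_pdx hf).differentiable (by simp)), uncurry_pdx hf,
    pd_comp_aux hf (x, y) (1, 0)]
  rfl

lemma pdx_pdy_eq (hf : ContDiff ℝ (⊤ : ℕ∞) (uncurry f)) (x y : ℝ) :
    pdx (pdy f) x y = fderiv ℝ (fderiv ℝ (uncurry f)) (x, y) (1, 0) (0, 1) := by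
  rw [pdx_eq ((contDiff_pdy hf).differentiable (by simp)), uncurry_pdy hf,
    pd_comp_aux hf (x, y) (0, 1)]
  rfl

lemma pdy_pdy_eq (hf : ContDiff ℝ (⊤ : ℕ∞) (uncurry f)) (x y : ℝ) :
    pdy (pdy f) x y = fderiv ℝ (fderiv ℝ (uncurry f)) (x, y) (0, 1) (0, 1) := by
  rw [pdy_eq ((contDiff_pdy hf).differentiable (by simp)), uncurry_pdy hf,
    pd_comp_aux hf (x, y) (0, 1)]
  rfl

lemma pdx_pdy_comm (hf : ContDiff ℝ (⊤ : ℕ∞) (uncurry f)) (x y : ℝ) :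
    pdx (pdy f) x y = pdy (pdx f) x y := by
  rw [pdx_pdy_eq hf, pdy_pdx_eq hf]
  have hder : ∀ q : ℝ × ℝ, HasFDerivAt (uncurry f) (fderiv ℝ (uncurry f) q) q :=
    fun q => ((hf.differentiable (by simp)) q).hasFDerivAt
  have hd2 : HasFDerivAt (fderiv ℝ (uncurry f)) (fderiv ℝ (fderiv ℝ (uncurry f)) (x, y)) (x, y) :=
    (((hf.fderiv_right (m := (⊤ : ℕ∞)) (by simp)).differentiable (by simp)) (x, y)).hasFDerivAt
  exact second_derivative_symmetric hder hd2 (1, 0) (0, 1)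

/-- first-order bound -/
lemma abs_pdx_le (hf : ContDiff ℝ (⊤ : ℕ∞) (uncurry f)) (x y : ℝ) :
    |pdx f x y| ≤ ‖iteratedFDeriv ℝ 1 (uncurry f) (x, y)‖ := by
  rw [pdx_eq (hf.differentiable (by simp))]
  calc |fderiv ℝ (uncurry f) (x, y) (1, 0)| ≤ ‖fderiv ℝ (uncurry f) (x, y)‖ * ‖((1:ℝ), (0:ℝ))‖ :=
        (fderiv ℝ (uncurry f) (x, y)).le_opNorm _
    _ = ‖iteratedFDeriv ℝ 1 (uncurry f) (x, y)‖ := by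
        rw [← norm_iteratedFDeriv_fderiv, norm_iteratedFDeriv_zero]
        simp [Prod.norm_def]

lemma abs_pdy_le (hf : ContDiff ℝ (⊤ : ℕ∞) (uncurry f)) (x y : ℝ) :
    |pdy f x y| ≤ ‖iteratedFDeriv ℝ 1 (uncurry f) (x, y)‖ := by
  rw [pdy_eq (hf.differentiable (by simp))]
  calc |fderiv ℝ (uncurry f) (x, y) (0, 1)| ≤ ‖fderiv ℝ (uncurry f) (x, y)‖ * ‖((0:ℝ), (1:ℝ))‖ :=
        (fderiv ℝ (uncurry f) (x, y)).le_opNorm _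
    _ = ‖iteratedFDeriv ℝ 1 (uncurry f) (x, y)‖ := by
        rw [← norm_iteratedFDeriv_fderiv, norm_iteratedFDeriv_zero]
        simp [Prod.norm_def]

lemma abs_d2_le (hf : ContDiff ℝ (⊤ : ℕ∞) (uncurry f)) (x y : ℝ) (v w : ℝ × ℝ)
    (hv : ‖v‖ ≤ 1) (hw : ‖w‖ ≤ 1) :
    |fderiv ℝ (fderiv ℝ (uncurry f)) (x, y) v w| ≤ ‖iteratedFDeriv ℝ 2 (uncurry f) (x, y)‖ := by
  have h1 : |fderiv ℝ (fderiv ℝ (uncurry f)) (x, y) v w|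
      ≤ ‖fderiv ℝ (fderiv ℝ (uncurry f)) (x, y)‖ * ‖v‖ * ‖w‖ :=
    (fderiv ℝ (fderiv ℝ (uncurry f)) (x, y)).le_opNorm₂ v w
  have h2 : ‖fderiv ℝ (fderiv ℝ (uncurry f)) (x, y)‖ = ‖iteratedFDeriv ℝ 2 (uncurry f) (x, y)‖ := by
    rw [← norm_iteratedFDeriv_fderiv, ← norm_iteratedFDeriv_fderiv, norm_iteratedFDeriv_zero]
  calc |fderiv ℝ (fderiv ℝ (uncurry f)) (x, y) v w|
      ≤ ‖fderiv ℝ (fderiv ℝ (uncurry f)) (x, y)‖ * ‖v‖ * ‖w‖ := h1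
    _ ≤ ‖fderiv ℝ (fderiv ℝ (uncurry f)) (x, y)‖ * 1 * 1 := by
        have h0 : (0:ℝ) ≤ ‖fderiv ℝ (fderiv ℝ (uncurry f)) (x, y)‖ := by positivity
        have := mul_le_mul (mul_le_mul_of_nonneg_left hv h0) hw (norm_nonneg w)
          (by positivity)
        linarith [this]
    _ = ‖iteratedFDeriv ℝ 2 (uncurry f) (x, y)‖ := by rw [h2]; ring

end second

section analysis

open intervalIntegral Set Filter Topology

/-- differentiation under the interval integral, for jointly continuous data -/
lemma hasDerivAt_param_integral (g g' : ℝ → ℝ → ℝ)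
    (hg : Continuous (uncurry g)) (hg' : Continuous (uncurry g'))
    (hder : ∀ t y, HasDerivAt (fun y' => g t y') (g' t y) y) (y : ℝ) :
    HasDerivAt (fun y' => ∫ t in (0:ℝ)..(2*π), g t y')
      (∫ t in (0:ℝ)..(2*π), g' t y) y := by
  obtain ⟨C, hC⟩ : ∃ C, ∀ p ∈ (uIcc (0:ℝ) (2*π)) ×ˢ (Icc (y-1) (y+1)), ‖uncurry g' p‖ ≤ C :=
    (isCompact_uIcc.prod isCompact_Icc).exists_bound_of_continuousOn hg'.continuousOn
  have main := intervalIntegral.hasDerivAt_integral_of_dominated_loc_of_deriv_le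
    (F := fun y' t => g t y') (F' := fun y' t => g' t y') (x₀ := y)
    (bound := fun _ => C) (a := 0) (b := 2*π) (μ := MeasureTheory.volume)
    (s := Metric.ball y 1) (Metric.ball_mem_nhds y one_pos)
    (Eventually.of_forall fun y' =>
      ((hg.comp (continuous_id.prodMk continuous_const)).aestronglyMeasurable))
    ((hg.comp (continuous_id.prodMk continuous_const)).intervalIntegrable 0 (2*π))
    ((hg'.comp (continuous_id.prodMk continuous_const)).aestronglyMeasurable)
    (Eventually.of_forall fun t ht y' hy' => by
      have ht' : t ∈ uIcc (0:ℝ) (2*π) := uIoc_subset_uIcc ht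
      have hy'' : y' ∈ Icc (y-1) (y+1) := by
        have := mem_ball_iff_norm.mp hy'
        rw [Real.norm_eq_abs, abs_lt] at this
        constructor <;> linarith [this.1, this.2]
      exact hC (t, y') ⟨ht', hy''⟩)
    (intervalIntegrable_const)
    (Eventually.of_forall fun t ht y' hy' => hder t y')
  exact main.2

lemma convexOn_nonneg_tendsto_zero (F : ℝ → ℝ) (hc : ConvexOn ℝ Set.univ F)
    (hnn : ∀ y, 0 ≤ F y) (htop : Tendsto F atTop (𝓝 0)) (hbot : Tendsto F atBot (𝓝 0)) :
    ∀ y, F y = 0 := by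
  intro y
  refine le_antisymm ?_ (hnn y)
  refine le_of_forall_pos_le_add fun ε hε => ?_
  obtain ⟨b, hby, hbε⟩ : ∃ b, y < b ∧ F b < ε := by
    have := (htop.eventually_lt_const hε).and (eventually_gt_atTop y)
    obtain ⟨b, h1, h2⟩ := this.exists
    exact ⟨b, h2, h1⟩
  obtain ⟨a, hay, haε⟩ : ∃ a, a < y ∧ F a < ε := by
    have := (hbot.eventually_lt_const hε).and (eventually_lt_atBot y)
    obtain ⟨a, h1, h2⟩ := this.exists
    exact ⟨a, h2, h1⟩
  set t : ℝ := (b - y) / (b - a) with ht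
  have hab : a < b := hay.trans hby
  have hba : (0:ℝ) < b - a := by linarith
  have ht0 : 0 ≤ t := div_nonneg (by linarith) (by linarith)
  have ht1 : t ≤ 1 := by rw [ht, div_le_one hba]; linarith
  have hsum : t + (1 - t) = 1 := by ring
  have hyy : t • a + (1 - t) • b = y := by
    field_simp [ht, smul_eq_mul]
    have htm : t * (b - a) = b - y := by rw [ht]; exact div_mul_cancel₀ _ hba.ne'
    clear_value t
    linear_combination -htm
  have := hc.2 (Set.mem_univ a) (Set.mem_univ b) ht0 (by linarith) hsum
  rw [hyy] at this
  have h1 : t * F a ≤ t * ε := by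
    apply mul_le_mul_of_nonneg_left (le_of_lt haε) ht0
  have h2 : (1 - t) * F b ≤ (1 - t) * ε := by
    apply mul_le_mul_of_nonneg_left (le_of_lt hbε) (by linarith)
  have : F y ≤ t * ε + (1 - t) * ε := by
    calc F y ≤ t • F a + (1 - t) • F b := this
      _ = t * F a + (1 - t) * F b := by simp [smul_eq_mul]
      _ ≤ t * ε + (1 - t) * ε := add_le_add h1 h2
  calc F y ≤ t * ε + (1 - t) * ε := this
    _ = ε := by ring
    _ ≤ 0 + ε := by linarith

lemma zero_of_integral_window (g : ℝ → ℝ) (hg : Continuous g) (hnn : ∀ t, 0 ≤ g t) (x : ℝ)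
    (h0 : ∫ t in (x - π)..(x + π), g t = 0) : g x = 0 := by
  by_contra hx
  have hpos : 0 < g x := lt_of_le_of_ne (hnn x) (Ne.symm hx)
  have : 0 < ∫ t in (x - π)..(x + π), g t :=
    intervalIntegral.integral_pos (by linarith [Real.pi_pos])
      hg.continuousOn (fun t _ => hnn t)
      ⟨x, ⟨by linarith [Real.pi_pos], by linarith [Real.pi_pos]⟩, hpos⟩
  linarith [h0 ▸ this]

end analysis

section periodic
variable {f : ℝ → ℝ → ℝ}

lemma periodic_deriv' (g : ℝ → ℝ) (c : ℝ) (h : Function.Periodic g c) :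
    Function.Periodic (deriv g) c := by
  intro x
  rw [← deriv_comp_add_const g c x, h.funext]

lemma perX_pdx (h : PerX f) : PerX (pdx f) := fun y => periodic_deriv' _ _ (h y)

lemma perX_pdy (h : PerX f) : PerX (pdy f) := by
  intro y x
  show pdy f (x + 2*π) y = pdy f x y
  unfold pdy
  congr 1
  funext y'
  exact h y' x

end periodic

section liouville

open intervalIntegral Set Filter Topology

set_option maxHeartbeats 1000000 in
lemma liouville_cylinder (h : ℝ → ℝ → ℝ) (hs : ContDiff ℝ (⊤ : ℕ∞) (uncurry h)) (hper : PerX h)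
    (hdec : ∃ C : ℝ, ∀ x y : ℝ, (1 + y^2) * |h x y| ≤ C)
    (hlap : ∀ x y, lap h x y = 0) : ∀ x y, h x y = 0 := by
  obtain ⟨C, hC⟩ := hdec
  have hd : Differentiable ℝ (uncurry h) := hs.differentiable (by simp)
  have hsy : ContDiff ℝ (⊤ : ℕ∞) (uncurry (pdy h)) := contDiff_pdy hs
  have hsyy : ContDiff ℝ (⊤ : ℕ∞) (uncurry (pdy (pdy h))) := contDiff_pdy hsy
  have hsx : ContDiff ℝ (⊤ : ℕ∞) (uncurry (pdx h)) := contDiff_pdx hs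
  have hsxx : ContDiff ℝ (⊤ : ℕ∞) (uncurry (pdx (pdx h))) := contDiff_pdx hsx
  have ch : Continuous fun p : ℝ × ℝ => h p.1 p.2 := hs.continuous
  have chy : Continuous fun p : ℝ × ℝ => pdy h p.1 p.2 := hsy.continuous
  have chyy : Continuous fun p : ℝ × ℝ => pdy (pdy h) p.1 p.2 := hsyy.continuous
  have chx : Continuous fun p : ℝ × ℝ => pdx h p.1 p.2 := hsx.continuous
  have chxx : Continuous fun p : ℝ × ℝ => pdx (pdx h) p.1 p.2 := hsxx.continuous
  set F : ℝ → ℝ := fun y => ∫ x in (0:ℝ)..(2*π), (h x y)^2 with hF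
  set G : ℝ → ℝ := fun y => ∫ x in (0:ℝ)..(2*π), 2 * h x y * pdy h x y with hG
  set H : ℝ → ℝ := fun y =>
    ∫ x in (0:ℝ)..(2*π), (2 * (pdy h x y)^2 + 2 * h x y * pdy (pdy h) x y) with hH
  -- F' = G
  have hFG : ∀ y, HasDerivAt F (G y) y := by
    intro y
    apply hasDerivAt_param_integral (fun t y' => (h t y')^2)
      (fun t y' => 2 * h t y' * pdy h t y')
    · exact ch.pow 2
    · exact (continuous_const.mul ch).mul chy
    · intro t y'
      have : HasDerivAt (fun s => (h t s)^2) _ y' := (hasDerivAt_pdy hd t y').pow 2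
      simpa [mul_comm, mul_assoc, mul_left_comm] using this
  -- G' = H
  have hGH : ∀ y, HasDerivAt G (H y) y := by
    intro y
    apply hasDerivAt_param_integral (fun t y' => 2 * h t y' * pdy h t y')
      (fun t y' => 2 * (pdy h t y')^2 + 2 * h t y' * pdy (pdy h) t y')
    · exact (continuous_const.mul ch).mul chy
    · exact (continuous_const.mul (chy.pow 2)).add ((continuous_const.mul ch).mul chyy)
    · intro t y'
      have h1 : HasDerivAt (fun s => 2 * h t s) (2 * pdy h t y') y' :=
        (hasDerivAt_pdy hd t y').const_mul 2
      have h2 : HasDerivAt (fun s => pdy h t s) (pdy (pdy h) t y') y' :=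
        hasDerivAt_pdy (hsy.differentiable (by simp)) t y'
      have : HasDerivAt (fun s => 2 * h t s * pdy h t s) _ y' := h1.mul h2
      convert this using 1
      ring
  -- H ≥ 0 via integration by parts in x
  have hHnn : ∀ y, 0 ≤ H y := by
    intro y
    have cxy : ∀ g : ℝ → ℝ → ℝ, Continuous (fun p : ℝ × ℝ => g p.1 p.2) →
        Continuous fun x => g x y := fun g hg =>
      hg.comp (continuous_id.prodMk continuous_const)
    -- pointwise: pdy pdy h = - pdx pdx h
    have hpt : ∀ x, pdy (pdy h) x y = - pdx (pdx h) x y := by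
      intro x
      have := hlap x y
      unfold lap at this
      linarith
    have hsplit : H y = (∫ x in (0:ℝ)..(2*π), 2 * (pdy h x y)^2)
        + ∫ x in (0:ℝ)..(2*π), 2 * h x y * pdy (pdy h) x y := by
      rw [hH]
      exact intervalIntegral.integral_add
        ((continuous_const.mul ((cxy _ chy).pow 2)).intervalIntegrable _ _)
        (((continuous_const.mul (cxy _ ch)).mul (cxy _ chyy)).intervalIntegrable _ _)
    -- integration by parts
    have hparts : ∫ x in (0:ℝ)..(2*π), h x y * pdx (pdx h) x y
        = - ∫ x in (0:ℝ)..(2*π), (pdx h x y)^2 := by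
      have hu : ∀ x ∈ uIcc (0:ℝ) (2*π), HasDerivAt (fun x' => h x' y) (pdx h x y) x :=
        fun x _ => hasDerivAt_pdx hd x y
      have hv : ∀ x ∈ uIcc (0:ℝ) (2*π), HasDerivAt (fun x' => pdx h x' y) (pdx (pdx h) x y) x :=
        fun x _ => hasDerivAt_pdx (hsx.differentiable (by simp)) x y
      have hibp := intervalIntegral.integral_mul_deriv_eq_deriv_mul hu hv
        ((cxy _ chx).intervalIntegrable _ _) ((cxy _ chxx).intervalIntegrable _ _)
      have hb1 : h (2*π) y = h 0 y := by
        have := hper y 0; simpa using this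
      have hb2 : pdx h (2*π) y = pdx h 0 y := by
        have := perX_pdx hper y 0; simpa using this
      rw [hibp, hb1, hb2]
      have : ∫ x in (0:ℝ)..(2*π), pdx h x y * pdx h x y
          = ∫ x in (0:ℝ)..(2*π), (pdx h x y)^2 := by
        congr 1; funext x; ring
      rw [this]; ring
    have h2nd : ∫ x in (0:ℝ)..(2*π), 2 * h x y * pdy (pdy h) x y
        = 2 * ∫ x in (0:ℝ)..(2*π), (pdx h x y)^2 := by
      have : (fun x => 2 * h x y * pdy (pdy h) x y)
          = fun x => (-2 : ℝ) * (h x y * pdx (pdx h) x y) := by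
        funext x; rw [hpt x]; ring
      rw [this, intervalIntegral.integral_const_mul, hparts]
      ring
    rw [hsplit, h2nd]
    have i1 : 0 ≤ ∫ x in (0:ℝ)..(2*π), 2 * (pdy h x y)^2 :=
      intervalIntegral.integral_nonneg (by positivity) (fun u _ => by positivity)
    have i2 : 0 ≤ ∫ x in (0:ℝ)..(2*π), (pdx h x y)^2 :=
      intervalIntegral.integral_nonneg (by positivity) (fun u _ => by positivity)
    linarith
  -- convexity of F
  have hFderiv : deriv F = G := funext fun y => (hFG y).deriv
  have hconv : ConvexOn ℝ Set.univ F := by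
    apply convexOn_of_deriv2_nonneg' convex_univ
    · exact fun y _ => ((hFG y).differentiableAt).differentiableWithinAt
    · rw [hFderiv]
      exact fun y _ => ((hGH y).differentiableAt).differentiableWithinAt
    · intro y _
      have : deriv^[2] F y = deriv (deriv F) y := rfl
      rw [this, hFderiv, (hGH y).deriv]
      exact hHnn y
  -- F ≥ 0
  have hFnn : ∀ y, 0 ≤ F y := fun y =>
    intervalIntegral.integral_nonneg (by positivity) (fun u _ => by positivity)
  -- F decays
  have hC0 : 0 ≤ C := le_trans (by positivity) (hC 0 0)
  have hFle : ∀ y, F y ≤ (2*π) * (C^2 / ((1+y^2)^2)) := by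
    intro y
    have hbd : ∀ x ∈ Icc (0:ℝ) (2*π), (h x y)^2 ≤ C^2 / (1+y^2)^2 := by
      intro x _
      have h1 : |h x y| ≤ C / (1+y^2) := by
        rw [le_div_iff₀ (by positivity)]
        calc |h x y| * (1+y^2) = (1+y^2) * |h x y| := by ring
          _ ≤ C := hC x y
      calc (h x y)^2 = |h x y|^2 := (sq_abs _).symm
        _ ≤ (C / (1+y^2))^2 := pow_le_pow_left₀ (abs_nonneg _) h1 2
        _ = C^2 / (1+y^2)^2 := div_pow C (1+y^2) 2
    calc F y ≤ ∫ _x in (0:ℝ)..(2*π), C^2 / (1+y^2)^2 :=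
          intervalIntegral.integral_mono_on (by positivity)
            (((ch.comp (continuous_id.prodMk continuous_const)).pow 2).intervalIntegrable _ _)
            (intervalIntegrable_const) hbd
      _ = (2*π) * (C^2 / (1+y^2)^2) := by
          rw [intervalIntegral.integral_const]; simp [smul_eq_mul]
  have hsq_top : Tendsto (fun y : ℝ => y^2) atTop atTop :=
    tendsto_pow_atTop (by norm_num)
  have hsq_bot : Tendsto (fun y : ℝ => y^2) atBot atTop := by
    have habs : Tendsto (fun y : ℝ => |y|) atBot atTop := tendsto_abs_atBot_atTop
    have h2 := (tendsto_pow_atTop (n := 2) (by norm_num)).comp habs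
    exact h2.congr fun y => sq_abs y
  have key : ∀ l : Filter ℝ, Tendsto (fun y : ℝ => y^2) l atTop →
      Tendsto (fun y : ℝ => (2*π) * (C^2 / ((1+y^2)^2))) l (𝓝 0) := by
    intro l hl
    have hden : Tendsto (fun y : ℝ => (1+y^2)^2) l atTop :=
      tendsto_atTop_mono (fun y => by nlinarith [sq_nonneg y, sq_nonneg (1+y^2)]) hl
    have hdiv : Tendsto (fun y : ℝ => C^2 / (1+y^2)^2) l (𝓝 0) :=
      Tendsto.div_atTop tendsto_const_nhds hden
    have h3 := hdiv.const_mul (2*π)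
    simpa using h3
  have hmajor_top := key atTop hsq_top
  have hmajor_bot := key atBot hsq_bot
  have htop : Tendsto F atTop (𝓝 0) := squeeze_zero hFnn hFle hmajor_top
  have hbot : Tendsto F atBot (𝓝 0) := squeeze_zero hFnn hFle hmajor_bot
  -- conclude F ≡ 0
  have hF0 : ∀ y, F y = 0 := convexOn_nonneg_tendsto_zero F hconv hFnn htop hbot
  -- conclude h ≡ 0
  intro x y
  have hper2 : Function.Periodic (fun t => (h t y)^2) (2*π) := by
    intro t
    show (h (t + 2*π) y)^2 = (h t y)^2
    rw [show h (t + 2*π) y = h t y from hper y t]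
  have hwin : ∫ t in (x - π)..(x + π), (h t y)^2 = 0 := by
    have heq : x + π = (x - π) + 2*π := by ring
    rw [heq, hper2.intervalIntegral_add_eq (x - π) 0]
    have h0 : (0:ℝ) + 2*π = 2*π := by ring
    rw [h0]
    exact hF0 y
  have := zero_of_integral_window (fun t => (h t y)^2)
    ((ch.comp (continuous_id.prodMk continuous_const)).pow 2)
    (fun t => by positivity) x hwin
  exact pow_eq_zero_iff two_ne_zero |>.mp this

end liouville

section calc2
open Set
variable {f g : ℝ → ℝ → ℝ}

lemma norm_it0 (f : ℝ → ℝ → ℝ) (x y : ℝ) :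
    ‖iteratedFDeriv ℝ 0 (uncurry f) (x, y)‖ = |f x y| := by
  rw [norm_iteratedFDeriv_zero]
  exact Real.norm_eq_abs _

lemma abs_pdx_pdx_le (hf : ContDiff ℝ (⊤ : ℕ∞) (uncurry f)) (x y : ℝ) :
    |pdx (pdx f) x y| ≤ ‖iteratedFDeriv ℝ 2 (uncurry f) (x, y)‖ := by
  rw [pdx_pdx_eq hf]
  exact abs_d2_le hf x y _ _ (by simp [Prod.norm_def]) (by simp [Prod.norm_def])

lemma abs_pdy_pdy_le (hf : ContDiff ℝ (⊤ : ℕ∞) (uncurry f)) (x y : ℝ) :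
    |pdy (pdy f) x y| ≤ ‖iteratedFDeriv ℝ 2 (uncurry f) (x, y)‖ := by
  rw [pdy_pdy_eq hf]
  exact abs_d2_le hf x y _ _ (by simp [Prod.norm_def]) (by simp [Prod.norm_def])

lemma contDiff_sub_fun (hf : ContDiff ℝ (⊤ : ℕ∞) (uncurry f)) (hg : ContDiff ℝ (⊤ : ℕ∞) (uncurry g)) :
    ContDiff ℝ (⊤ : ℕ∞) (uncurry (fun x y => f x y - g x y)) := hf.sub hg

lemma contDiff_ymul (hf : ContDiff ℝ (⊤ : ℕ∞) (uncurry f)) :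
    ContDiff ℝ (⊤ : ℕ∞) (uncurry (fun x y => y * f x y)) := by
  exact (contDiff_snd.of_le le_top).mul hf

lemma pdx_sub_fun (hf : ContDiff ℝ (⊤ : ℕ∞) (uncurry f)) (hg : ContDiff ℝ (⊤ : ℕ∞) (uncurry g)) :
    pdx (fun x y => f x y - g x y) = fun x y => pdx f x y - pdx g x y := by
  funext x y
  exact ((hasDerivAt_pdx (hf.differentiable (by simp)) x y).sub
    (hasDerivAt_pdx (hg.differentiable (by simp)) x y)).deriv

lemma pdy_sub_fun (hf : ContDiff ℝ (⊤ : ℕ∞) (uncurry f)) (hg : ContDiff ℝ (⊤ : ℕ∞) (uncurry g)) :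
    pdy (fun x y => f x y - g x y) = fun x y => pdy f x y - pdy g x y := by
  funext x y
  exact ((hasDerivAt_pdy (hf.differentiable (by simp)) x y).sub
    (hasDerivAt_pdy (hg.differentiable (by simp)) x y)).deriv

lemma lap_sub (hf : ContDiff ℝ (⊤ : ℕ∞) (uncurry f)) (hg : ContDiff ℝ (⊤ : ℕ∞) (uncurry g)) (x y : ℝ) :
    lap (fun x y => f x y - g x y) x y = lap f x y - lap g x y := by
  unfold lap
  rw [pdx_sub_fun hf hg, pdy_sub_fun hf hg,
    pdx_sub_fun (contDiff_pdx hf) (contDiff_pdx hg),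
    pdy_sub_fun (contDiff_pdy hf) (contDiff_pdy hg)]
  ring

lemma pdx_ymul_fun (hf : ContDiff ℝ (⊤ : ℕ∞) (uncurry f)) :
    pdx (fun x y => y * f x y) = fun x y => y * pdx f x y := by
  funext x y
  exact ((hasDerivAt_pdx (hf.differentiable (by simp)) x y).const_mul y).deriv

lemma pdy_ymul_fun (hf : ContDiff ℝ (⊤ : ℕ∞) (uncurry f)) :
    pdy (fun x y => y * f x y) = fun x y => f x y + y * pdy f x y := by
  funext x y
  have h1 : HasDerivAt (fun y' => y' * f x y') (1 * f x y + y * pdy f x y) y :=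
    (hasDerivAt_id y).mul (hasDerivAt_pdy (hf.differentiable (by simp)) x y)
  have := h1.deriv
  simpa [pdy] using this

lemma lap_ymul (hf : ContDiff ℝ (⊤ : ℕ∞) (uncurry f)) (x y : ℝ) :
    lap (fun x y => y * f x y) x y = y * lap f x y + 2 * pdy f x y := by
  unfold lap
  rw [pdx_ymul_fun hf, pdy_ymul_fun hf]
  have h1 : pdx (fun x y => y * pdx f x y) x y = y * pdx (pdx f) x y := by
    exact ((hasDerivAt_pdx ((contDiff_pdx hf).differentiable (by simp)) x y).const_mul y).deriv
  have h2 : pdy (fun x y => f x y + y * pdy f x y) x y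
      = pdy f x y + (pdy f x y + y * pdy (pdy f) x y) := by
    have ha : HasDerivAt (fun y' => f x y') (pdy f x y) y :=
      hasDerivAt_pdy (hf.differentiable (by simp)) x y
    have hb : HasDerivAt (fun y' => y' * pdy f x y') (1 * pdy f x y + y * pdy (pdy f) x y) y :=
      (hasDerivAt_id y).mul (hasDerivAt_pdy ((contDiff_pdy hf).differentiable (by simp)) x y)
    have hab : HasDerivAt (fun y' => f x y' + y' * pdy f x y') _ y := ha.add hb
    have := hab.deriv
    simpa [pdy] using this
  rw [h1, h2]
  ring

lemma pdx_pdy_comm_fun (hf : ContDiff ℝ (⊤ : ℕ∞) (uncurry f)) :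
    pdx (pdy f) = pdy (pdx f) :=
  funext fun x => funext fun y => pdx_pdy_comm hf x y

lemma pdy_add_fun (hf : ContDiff ℝ (⊤ : ℕ∞) (uncurry f)) (hg : ContDiff ℝ (⊤ : ℕ∞) (uncurry g)) :
    pdy (fun x y => f x y + g x y) = fun x y => pdy f x y + pdy g x y := by
  funext x y
  exact ((hasDerivAt_pdy (hf.differentiable (by simp)) x y).add
    (hasDerivAt_pdy (hg.differentiable (by simp)) x y)).deriv

/-- `lap` commutes with `pdy` for smooth functions. -/
lemma lap_pdy_comm (hf : ContDiff ℝ (⊤ : ℕ∞) (uncurry f)) (x y : ℝ) :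
    lap (pdy f) x y = pdy (lap f) x y := by
  have hfx := contDiff_pdx hf
  have hfy := contDiff_pdy hf
  have hfxx := contDiff_pdx hfx
  have hfyy := contDiff_pdy hfy
  have e1 : pdy (lap f) x y = pdy (pdx (pdx f)) x y + pdy (pdy (pdy f)) x y := by
    have : lap f = fun x y => pdx (pdx f) x y + pdy (pdy f) x y := rfl
    rw [this, pdy_add_fun hfxx hfyy]
  have e2 : pdx (pdx (pdy f)) x y = pdy (pdx (pdx f)) x y := by
    rw [show pdx (pdy f) = pdy (pdx f) from pdx_pdy_comm_fun hf]
    exact pdx_pdy_comm hfx x y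
  show pdx (pdx (pdy f)) x y + pdy (pdy (pdy f)) x y = _
  rw [e1, e2]

end calc2

section final
variable {f g : ℝ → ℝ → ℝ}

lemma perX_lap (h : PerX f) : PerX (lap f) := by
  intro y x
  show lap f (x + 2*π) y = lap f x y
  unfold lap
  rw [show pdx (pdx f) (x + 2*π) y = pdx (pdx f) x y from perX_pdx (perX_pdx h) y x,
    show pdy (pdy f) (x + 2*π) y = pdy (pdy f) x y from perX_pdy (perX_pdy h) y x]

lemma pdx_const_mul_fun (c : ℝ) (hf : ContDiff ℝ (⊤ : ℕ∞) (uncurry f)) :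
    pdx (fun x y => c * f x y) = fun x y => c * pdx f x y := by
  funext x y
  exact ((hasDerivAt_pdx (hf.differentiable (by simp)) x y).const_mul c).deriv

lemma pdy_const_mul_fun (c : ℝ) (hf : ContDiff ℝ (⊤ : ℕ∞) (uncurry f)) :
    pdy (fun x y => c * f x y) = fun x y => c * pdy f x y := by
  funext x y
  exact ((hasDerivAt_pdy (hf.differentiable (by simp)) x y).const_mul c).deriv

lemma contDiff_const_mul (c : ℝ) (hf : ContDiff ℝ (⊤ : ℕ∞) (uncurry f)) :
    ContDiff ℝ (⊤ : ℕ∞) (uncurry (fun x y => c * f x y)) := contDiff_const.mul hf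

lemma lap_const_mul (c : ℝ) (hf : ContDiff ℝ (⊤ : ℕ∞) (uncurry f)) (x y : ℝ) :
    lap (fun x y => c * f x y) x y = c * lap f x y := by
  unfold lap
  rw [pdx_const_mul_fun c hf, pdy_const_mul_fun c hf,
    pdx_const_mul_fun c (contDiff_pdx hf), pdy_const_mul_fun c (contDiff_pdy hf)]
  ring

lemma contDiff_lap (hf : ContDiff ℝ (⊤ : ℕ∞) (uncurry f)) : ContDiff ℝ (⊤ : ℕ∞) (uncurry (lap f)) := by
  have : uncurry (lap f)
      = fun p : ℝ × ℝ => uncurry (pdx (pdx f)) p + uncurry (pdy (pdy f)) p := rfl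
  rw [this]
  exact (contDiff_pdx (contDiff_pdx hf)).add (contDiff_pdy (contDiff_pdy hf))

end final


set_option maxHeartbeats 1000000

/-- Pointwise identity `y(u·∇ω) = (∇⊥Δ⁻¹(yω))·∇ω + 2(∇⊥∂_yΔ⁻²ω)·∇ω + (Δ⁻¹ω)∂ₓω`,
where `u = ∇⊥Δ⁻¹ω`; here `ψ = Δ⁻¹ω`, `φ = Δ⁻¹(yω)` and `χ = Δ⁻²∂_yω`. -/
theorem stmt17 (ω ψ φ χ : ℝ → ℝ → ℝ)
    (hω : ContDiff ℝ (⊤ : ℕ∞) (Function.uncurry ω)) (hωper : PerX ω)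
    (hωdec : RapidDecay ω) (hωavg : ZeroAvgX ω)
    (hψ : ContDiff ℝ (⊤ : ℕ∞) (Function.uncurry ψ)) (hψper : PerX ψ)
    (hψdec : RapidDecay ψ) (hψavg : ZeroAvgX ψ)
    (hφ : ContDiff ℝ (⊤ : ℕ∞) (Function.uncurry φ)) (hφper : PerX φ)
    (hφdec : RapidDecay φ) (hφavg : ZeroAvgX φ)
    (hχ : ContDiff ℝ (⊤ : ℕ∞) (Function.uncurry χ)) (hχper : PerX χ)
    (hχdec : RapidDecay χ) (hχavg : ZeroAvgX χ)
    (hΔψ : ∀ x y, lap ψ x y = ω x y)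
    (hΔφ : ∀ x y, lap φ x y = y * ω x y)
    (hΔΔχ : ∀ x y, lap (lap χ) x y = pdy ω x y) :
    ∀ x y : ℝ,
      y * ((-pdy ψ x y) * pdx ω x y + (pdx ψ x y) * pdy ω x y) =
        ((-pdy φ x y) * pdx ω x y + (pdx φ x y) * pdy ω x y)
          + 2 * ((-pdy χ x y) * pdx ω x y + (pdx χ x y) * pdy ω x y)
          + ψ x y * pdx ω x y := by
  -- Step A : lap χ = pdy ψ
  have stepA : ∀ x y, lap χ x y = pdy ψ x y := by
    have hs : ContDiff ℝ (⊤ : ℕ∞) (uncurry (fun x y => lap χ x y - pdy ψ x y)) :=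
      contDiff_sub_fun (contDiff_lap hχ) (contDiff_pdy hψ)
    have hper : PerX (fun x y => lap χ x y - pdy ψ x y) := by
      intro y x
      show lap χ (x + 2*π) y - pdy ψ (x + 2*π) y = lap χ x y - pdy ψ x y
      rw [show lap χ (x + 2*π) y = lap χ x y from perX_lap hχper y x,
        show pdy ψ (x + 2*π) y = pdy ψ x y from perX_pdy hψper y x]
    have hdec : ∃ C : ℝ, ∀ x y : ℝ, (1 + y^2) * |lap χ x y - pdy ψ x y| ≤ C := by
      obtain ⟨A, hA⟩ := hχdec 2 0
      obtain ⟨A2, hA2⟩ := hχdec 2 2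
      obtain ⟨B, hB⟩ := hψdec 1 0
      obtain ⟨B2, hB2⟩ := hψdec 1 2
      refine ⟨2*(A+A2) + (B+B2), fun x y => ?_⟩
      have h1 := abs_pdx_pdx_le hχ x y
      have h2 := abs_pdy_pdy_le hχ x y
      have h3 := abs_pdy_le hψ x y
      have eA := hA x y; have eA2 := hA2 x y
      have eB := hB x y; have eB2 := hB2 x y
      rw [pow_zero, one_mul] at eA eB
      rw [sq_abs] at eA2 eB2
      have habs : |lap χ x y - pdy ψ x y|
          ≤ |pdx (pdx χ) x y| + |pdy (pdy χ) x y| + |pdy ψ x y| := by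
        unfold lap
        calc |pdx (pdx χ) x y + pdy (pdy χ) x y - pdy ψ x y|
            ≤ |pdx (pdx χ) x y + pdy (pdy χ) x y| + |pdy ψ x y| := abs_sub _ _
          _ ≤ |pdx (pdx χ) x y| + |pdy (pdy χ) x y| + |pdy ψ x y| := by
              have := abs_add_le (pdx (pdx χ) x y) (pdy (pdy χ) x y)
              linarith
      have hN : |lap χ x y - pdy ψ x y|
          ≤ 2 * ‖iteratedFDeriv ℝ 2 (uncurry χ) (x, y)‖
            + ‖iteratedFDeriv ℝ 1 (uncurry ψ) (x, y)‖ := by linarith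
      have hy2 : (0:ℝ) ≤ y^2 := sq_nonneg y
      nlinarith [mul_le_mul_of_nonneg_left hN hy2, abs_nonneg (lap χ x y - pdy ψ x y),
        norm_nonneg (iteratedFDeriv ℝ 2 (uncurry χ) (x, y)),
        norm_nonneg (iteratedFDeriv ℝ 1 (uncurry ψ) (x, y))]
    have hlap0 : ∀ x y, lap (fun x y => lap χ x y - pdy ψ x y) x y = 0 := by
      intro x y
      rw [lap_sub (contDiff_lap hχ) (contDiff_pdy hψ) x y, lap_pdy_comm hψ x y]
      have h2 : pdy (lap ψ) x y = pdy ω x y := by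
        rw [show lap ψ = ω from funext fun a => funext fun b => hΔψ a b]
      rw [hΔΔχ x y, h2]
      ring
    intro x y
    have := liouville_cylinder _ hs hper hdec hlap0 x y
    linarith
  -- Step B : y ψ = φ + 2 χ
  have hsB : ContDiff ℝ (⊤ : ℕ∞) (uncurry (fun x y => y * ψ x y - φ x y - 2 * χ x y)) :=
    contDiff_sub_fun (contDiff_sub_fun (contDiff_ymul hψ) hφ) (contDiff_const_mul 2 hχ)
  have stepB : ∀ x y, y * ψ x y - φ x y - 2 * χ x y = 0 := by
    have hper : PerX (fun x y => y * ψ x y - φ x y - 2 * χ x y) := by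
      intro y x
      show y * ψ (x + 2*π) y - φ (x + 2*π) y - 2 * χ (x + 2*π) y = _
      rw [show ψ (x + 2*π) y = ψ x y from hψper y x,
        show φ (x + 2*π) y = φ x y from hφper y x,
        show χ (x + 2*π) y = χ x y from hχper y x]
    have hdec : ∃ C : ℝ, ∀ x y : ℝ,
        (1 + y^2) * |y * ψ x y - φ x y - 2 * χ x y| ≤ C := by
      obtain ⟨P1, hP1⟩ := hψdec 0 1
      obtain ⟨P3, hP3⟩ := hψdec 0 3
      obtain ⟨Q0, hQ0⟩ := hφdec 0 0
      obtain ⟨Q2, hQ2⟩ := hφdec 0 2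
      obtain ⟨R0, hR0⟩ := hχdec 0 0
      obtain ⟨R2, hR2⟩ := hχdec 0 2
      refine ⟨P1 + P3 + (Q0 + Q2) + 2*(R0 + R2), fun x y => ?_⟩
      have eP1 := hP1 x y; have eP3 := hP3 x y
      have eQ0 := hQ0 x y; have eQ2 := hQ2 x y
      have eR0 := hR0 x y; have eR2 := hR2 x y
      rw [norm_it0, pow_one] at eP1
      rw [norm_it0] at eP3
      rw [norm_it0, pow_zero, one_mul] at eQ0
      rw [norm_it0, sq_abs] at eQ2
      rw [norm_it0, pow_zero, one_mul] at eR0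
      rw [norm_it0, sq_abs] at eR2
      have hcube : |y|^3 = y^2 * |y| := by
        rw [pow_succ, sq_abs]
      rw [hcube] at eP3
      have habs : |y * ψ x y - φ x y - 2 * χ x y|
          ≤ |y| * |ψ x y| + |φ x y| + 2 * |χ x y| := by
        have t1 : |y * ψ x y - φ x y - 2 * χ x y|
            ≤ |y * ψ x y - φ x y| + |2 * χ x y| := abs_sub _ _
        have t2 : |y * ψ x y - φ x y| ≤ |y * ψ x y| + |φ x y| := abs_sub _ _
        have t3 : |y * ψ x y| = |y| * |ψ x y| := abs_mul _ _
        have t4 : |(2:ℝ) * χ x y| = 2 * |χ x y| := by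
          rw [abs_mul]; norm_num
        linarith
      have hy2 : (0:ℝ) ≤ y^2 := sq_nonneg y
      have hyabs : (0:ℝ) ≤ |y| := abs_nonneg y
      nlinarith [mul_le_mul_of_nonneg_left habs hy2, abs_nonneg (ψ x y),
        abs_nonneg (φ x y), abs_nonneg (χ x y),
        abs_nonneg (y * ψ x y - φ x y - 2 * χ x y)]
    have hlap0 : ∀ x y, lap (fun x y => y * ψ x y - φ x y - 2 * χ x y) x y = 0 := by
      intro x y
      have l1 : lap (fun x y => y * ψ x y - φ x y - 2 * χ x y) x y
          = lap (fun x y => y * ψ x y - φ x y) x y - lap (fun x y => 2 * χ x y) x y :=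
        lap_sub (contDiff_sub_fun (contDiff_ymul hψ) hφ) (contDiff_const_mul 2 hχ) x y
      have l2 : lap (fun x y => y * ψ x y - φ x y) x y
          = lap (fun x y => y * ψ x y) x y - lap φ x y :=
        lap_sub (contDiff_ymul hψ) hφ x y
      have l3 : lap (fun x y => y * ψ x y) x y = y * lap ψ x y + 2 * pdy ψ x y :=
        lap_ymul hψ x y
      have l4 : lap (fun x y => 2 * χ x y) x y = 2 * lap χ x y :=
        lap_const_mul 2 hχ x y
      rw [l1, l2, l3, l4, hΔψ x y, hΔφ x y, stepA x y]
      ring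
    exact liouville_cylinder _ hsB hper hdec hlap0
  -- Step C : differentiate the identity and conclude
  intro x y
  have hψd : Differentiable ℝ (uncurry ψ) := hψ.differentiable (by simp)
  have hφd : Differentiable ℝ (uncurry φ) := hφ.differentiable (by simp)
  have hχd : Differentiable ℝ (uncurry χ) := hχ.differentiable (by simp)
  have e1 : y * pdx ψ x y - pdx φ x y - 2 * pdx χ x y = 0 := by
    have hzero : (fun x' => y * ψ x' y - φ x' y - 2 * χ x' y) = fun _ => (0:ℝ) :=
      funext fun x' => stepB x' y
    have hd1 : HasDerivAt (fun x' => y * ψ x' y - φ x' y - 2 * χ x' y)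
        (y * pdx ψ x y - pdx φ x y - 2 * pdx χ x y) x :=
      (((hasDerivAt_pdx hψd x y).const_mul y).sub (hasDerivAt_pdx hφd x y)).sub
        ((hasDerivAt_pdx hχd x y).const_mul 2)
    have hd2 : HasDerivAt (fun x' => y * ψ x' y - φ x' y - 2 * χ x' y) 0 x := by
      rw [hzero]; exact hasDerivAt_const x 0
    exact hd1.unique hd2
  have e2 : 1 * ψ x y + y * pdy ψ x y - pdy φ x y - 2 * pdy χ x y = 0 := by
    have hzero : (fun y' => y' * ψ x y' - φ x y' - 2 * χ x y') = fun _ => (0:ℝ) :=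
      funext fun y' => stepB x y'
    have hd1 : HasDerivAt (fun y' => y' * ψ x y' - φ x y' - 2 * χ x y')
        (1 * ψ x y + y * pdy ψ x y - pdy φ x y - 2 * pdy χ x y) y :=
      (((hasDerivAt_id y).mul (hasDerivAt_pdy hψd x y)).sub (hasDerivAt_pdy hφd x y)).sub
        ((hasDerivAt_pdy hχd x y).const_mul 2)
    have hd2 : HasDerivAt (fun y' => y' * ψ x y' - φ x y' - 2 * χ x y') 0 y := by
      rw [hzero]; exact hasDerivAt_const y 0
    exact hd1.unique hd2
  linear_combination pdy ω x y * e1 - pdx ω x y * e2
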